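/- arXiv:1804.07087 — 2 statements merged into one kernel-verified Lean document; each statement's English description precedes it below -/
import Mathlib

section
/- The statistics maxdes and mindes are equidistributed on the set of all ordered set partitions of [n]: for each j, the number of ordered set partitions π of [n] with maxdes(π) = j equals the number with mindes(π) = j. Moreover, the reverse-complement map is a bijection witnessing this equidistribution and it preserves the number of blocks. -/
/-- The word of an ordered set partition: concatenate the blocks,
listing the elements of each block in increasing order. -/
def word (π : List (Finset ℕ)) : List ℕ :=
  (π.map (fun B => Finset.sort B (· ≤ ·))).flatten

/-- `π` is an ordered set partition of `[n] = {1,…,n}`: a list of nonempty,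
pairwise disjoint finsets whose union is `{1,…,n}`. -/
def IsOSP (n : ℕ) (π : List (Finset ℕ)) : Prop :=
  (∀ B ∈ π, B.Nonempty) ∧ π.Pairwise Disjoint ∧
    π.foldr (· ∪ ·) ∅ = Finset.Icc 1 n

noncomputable def minB (B : Finset ℕ) : ℕ := sInf (B : Set ℕ)
def maxB (B : Finset ℕ) : ℕ := B.sup id

/-- number of descents of a word -/
def desCount (w : List ℕ) : ℕ :=
  ((List.range (w.length - 1)).filter (fun i => w.getD (i + 1) 0 < w.getD i 0)).length

noncomputable def mindes (π : List (Finset ℕ)) : ℕ :=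
  ((List.range (π.length - 1)).filter
    (fun i => minB (π.getD (i + 1) ∅) < minB (π.getD i ∅))).length

def maxdes (π : List (Finset ℕ)) : ℕ :=
  ((List.range (π.length - 1)).filter
    (fun i => maxB (π.getD (i + 1) ∅) < maxB (π.getD i ∅))).length

noncomputable def pdes (π : List (Finset ℕ)) : ℕ :=
  ((List.range (π.length - 1)).filter
    (fun i => maxB (π.getD (i + 1) ∅) < minB (π.getD i ∅))).length

def Avoids12 (w : List ℕ) : Prop :=
  ¬ ∃ i j : ℕ, i < j ∧ j < w.length ∧ w.getD i 0 < w.getD j 0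

def Avoids21 (w : List ℕ) : Prop :=
  ¬ ∃ i j : ℕ, i < j ∧ j < w.length ∧ w.getD j 0 < w.getD i 0

def Avoids123 (w : List ℕ) : Prop :=
  ¬ ∃ i j k : ℕ, i < j ∧ j < k ∧ k < w.length ∧
    w.getD i 0 < w.getD j 0 ∧ w.getD j 0 < w.getD k 0

def Avoids132 (w : List ℕ) : Prop :=
  ¬ ∃ i j k : ℕ, i < j ∧ j < k ∧ k < w.length ∧
    w.getD i 0 < w.getD k 0 ∧ w.getD k 0 < w.getD j 0

def Avoids213 (w : List ℕ) : Prop :=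
  ¬ ∃ i j k : ℕ, i < j ∧ j < k ∧ k < w.length ∧
    w.getD j 0 < w.getD i 0 ∧ w.getD i 0 < w.getD k 0

def Avoids312 (w : List ℕ) : Prop :=
  ¬ ∃ i j k : ℕ, i < j ∧ j < k ∧ k < w.length ∧
    w.getD j 0 < w.getD k 0 ∧ w.getD k 0 < w.getD i 0

def Avoids321 (w : List ℕ) : Prop :=
  ¬ ∃ i j k : ℕ, i < j ∧ j < k ∧ k < w.length ∧
    w.getD k 0 < w.getD j 0 ∧ w.getD j 0 < w.getD i 0

/-- reverse-complement of an ordered set partition of `[n]` -/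
def rcomp (n : ℕ) (π : List (Finset ℕ)) : List (Finset ℕ) :=
  (π.map (fun B => B.image (fun a => n + 1 - a))).reverse

/-! Reverse-complement sends the sequence of block maxima of `π` to the reversed sequence of
complemented block minima `n + 1 - min B`, and symmetrically with minima and maxima exchanged.
Reversing a sequence and applying an order-reversing map preserves its number of descents, so
`maxdes (rcomp π) = mindes π`; since `rcomp` is an involution on ordered set partitions of `[n]`,
it is the required bijection. -/

open Finset

lemma mem_foldr_union {α : Type*} [DecidableEq α] {x : α} {π : List (Finset α)} :
    x ∈ π.foldr (· ∪ ·) ∅ ↔ ∃ B ∈ π, x ∈ B := by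
  induction π with
  | nil => simp
  | cons A π ih => simp [ih]

lemma IsOSP.subset_Icc {n : ℕ} {π : List (Finset ℕ)} (h : IsOSP n π) {B : Finset ℕ}
    (hB : B ∈ π) : B ⊆ Icc 1 n :=
  fun _ hx => h.2.2 ▸ mem_foldr_union.2 ⟨B, hB, hx⟩

section MinMax

variable {B : Finset ℕ} {a : ℕ}

lemma minB_mem (hB : B.Nonempty) : minB B ∈ B := by
  simpa [minB] using Nat.sInf_mem (s := (B : Set ℕ)) (coe_nonempty.mpr hB)

lemma minB_le (ha : a ∈ B) : minB B ≤ a :=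
  Nat.sInf_le (mem_coe.mpr ha)

lemma maxB_mem (hB : B.Nonempty) : maxB B ∈ B := by
  obtain ⟨b, hb, hb'⟩ := exists_mem_eq_sup B hB id
  rw [maxB, hb']
  exact hb

lemma le_maxB (ha : a ∈ B) : a ≤ maxB B :=
  le_sup (f := id) ha

lemma minB_empty : minB ∅ = 0 := by simp [minB]

lemma maxB_empty : maxB ∅ = 0 := rfl

lemma maxB_image_tsub (m : ℕ) (hB : B.Nonempty) : maxB (B.image (m - ·)) = m - minB B :=
  le_antisymm (Finset.sup_le fun _ hx => by
      obtain ⟨b, hb, rfl⟩ := mem_image.1 hx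
      exact Nat.sub_le_sub_left (minB_le hb) m)
    (le_maxB (mem_image_of_mem _ (minB_mem hB)))

lemma minB_image_tsub (m : ℕ) (hB : B.Nonempty) : minB (B.image (m - ·)) = m - maxB B := by
  refine le_antisymm (minB_le (mem_image_of_mem _ (maxB_mem hB))) ?_
  refine le_csInf (coe_nonempty.2 (hB.image _)) fun x hx => ?_
  obtain ⟨b, hb, rfl⟩ := mem_image.1 (mem_coe.1 hx)
  exact Nat.sub_le_sub_left (le_maxB hb) m

end MinMax

lemma image_tsub_image_tsub {m : ℕ} {B : Finset ℕ} (hB : ∀ a ∈ B, a ≤ m) :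
    (B.image (m - ·)).image (m - ·) = B := by
  rw [image_image]
  conv_rhs => rw [← image_id (s := B)]
  exact image_congr fun a ha => Nat.sub_sub_self (hB a ha)

lemma desCount_eq_card (w : List ℕ) :
    desCount w = #{i ∈ range (w.length - 1) | w.getD (i + 1) 0 < w.getD i 0} := rfl

-- `getD` pads blocks with `∅` and words with `0`; these agree because `minB ∅ = maxB ∅ = 0`.
lemma mindes_eq_desCount (π : List (Finset ℕ)) : mindes π = desCount (π.map minB) := by
  simp only [mindes, desCount, List.length_map, ← minB_empty, List.getD_map]

lemma maxdes_eq_desCount (π : List (Finset ℕ)) : maxdes π = desCount (π.map maxB) := by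
  simp only [maxdes, desCount, List.length_map, ← maxB_empty, List.getD_map]

lemma desCount_reverse_map {f : ℕ → ℕ} {s : Set ℕ} (hf : StrictAntiOn f s) {w : List ℕ}
    (hw : ∀ a ∈ w, a ∈ s) : desCount (w.map f).reverse = desCount w := by
  set k := w.length
  have hmem : ∀ j, j < k → w.getD j 0 ∈ s := fun j hj =>
    hw _ (List.getD_eq_getElem _ _ hj ▸ List.getElem_mem hj)
  have hget : ∀ i, i < k → (w.map f).reverse.getD i 0 = f (w.getD (k - 1 - i) 0) := by
    intro i hi
    rw [List.getD_eq_getElem _ _ (by simpa using hi), List.getD_eq_getElem _ _ (by omega)]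
    simp [List.getElem_reverse, k]
  -- reversing and applying an antitone map turns the descent at `i` into one at `k - 2 - i`
  have hdes : ∀ i, i + 1 < k → ((w.map f).reverse.getD (i + 1) 0 < (w.map f).reverse.getD i 0 ↔
      w.getD (k - 2 - i + 1) 0 < w.getD (k - 2 - i) 0) := by
    intro i hi
    rw [hget i (by omega), hget (i + 1) hi, show k - 1 - (i + 1) = k - 2 - i by omega,
      show k - 1 - i = k - 2 - i + 1 by omega]
    exact hf.lt_iff_gt (hmem _ (by omega)) (hmem _ (by omega))
  rw [desCount_eq_card, desCount_eq_card, List.length_reverse, List.length_map]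
  refine card_nbij' (k - 2 - ·) (k - 2 - ·) ?_ ?_ ?_ ?_ <;>
    intro i hi <;> simp only [coe_filter, mem_range, Set.mem_ofPred_eq] at hi ⊢
  · exact ⟨by omega, (hdes i (by omega)).1 hi.2⟩
  · refine ⟨by omega, (hdes (k - 2 - i) (by omega)).2 ?_⟩
    rw [show k - 2 - (k - 2 - i) = i by omega]
    exact hi.2
  · omega
  · omega

lemma strictAntiOn_const_tsub (m : ℕ) : StrictAntiOn (m - ·) (Set.Iic m) :=
  fun _ _ _ hb hab => Nat.sub_lt_sub_left (hab.trans_le hb) hab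

lemma image_const_tsub_Icc (n : ℕ) : (Icc 1 n).image (n + 1 - ·) = Icc 1 n := by
  ext x
  simp only [mem_image, mem_Icc]
  constructor
  · rintro ⟨a, ha, rfl⟩
    omega
  · exact fun hx => ⟨n + 1 - x, by omega, by omega⟩

lemma disjoint_image_const_tsub {m : ℕ} {A B : Finset ℕ} (hA : ∀ a ∈ A, a ≤ m)
    (hB : ∀ b ∈ B, b ≤ m) (h : Disjoint A B) : Disjoint (A.image (m - ·)) (B.image (m - ·)) := by
  rw [← image_tsub_image_tsub hA, ← image_tsub_image_tsub hB] at h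
  exact h.of_image_finset

lemma foldr_union_map_image {α β : Type*} [DecidableEq α] [DecidableEq β] (f : α → β)
    (π : List (Finset α)) :
    (π.map (·.image f)).foldr (· ∪ ·) ∅ = (π.foldr (· ∪ ·) ∅).image f := by
  induction π with
  | nil => simp
  | cons A π ih => simp [ih, image_union]

lemma foldr_union_reverse {α : Type*} [DecidableEq α] (π : List (Finset α)) :
    π.reverse.foldr (· ∪ ·) ∅ = π.foldr (· ∪ ·) ∅ := by
  ext x
  simp only [mem_foldr_union, List.mem_reverse]

lemma IsOSP.le_succ_of_mem {n : ℕ} {π : List (Finset ℕ)} (h : IsOSP n π) {B : Finset ℕ}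
    (hB : B ∈ π) : ∀ a ∈ B, a ≤ n + 1 :=
  fun _ ha => (mem_Icc.1 (h.subset_Icc hB ha)).2.trans n.le_succ

lemma rcomp_length (n : ℕ) (π : List (Finset ℕ)) : (rcomp n π).length = π.length := by
  simp [rcomp]

lemma isOSP_rcomp {n : ℕ} {π : List (Finset ℕ)} (h : IsOSP n π) : IsOSP n (rcomp n π) := by
  refine ⟨?_, ?_, ?_⟩
  · simp only [rcomp, List.mem_reverse, List.mem_map]
    rintro _ ⟨B, hB, rfl⟩
    exact (h.1 B hB).image _
  · rw [rcomp, List.pairwise_reverse, List.pairwise_map]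
    exact h.2.1.imp_of_mem fun hA hB hAB =>
      disjoint_image_const_tsub (h.le_succ_of_mem hB) (h.le_succ_of_mem hA) hAB.symm
  · rw [rcomp, foldr_union_reverse, foldr_union_map_image, h.2.2, image_const_tsub_Icc]

lemma IsOSP.rcomp_rcomp {n : ℕ} {π : List (Finset ℕ)} (h : IsOSP n π) :
    rcomp n (rcomp n π) = π := by
  rw [rcomp, rcomp, List.map_reverse, List.reverse_reverse, List.map_map]
  exact (List.map_congr_left fun B hB => image_tsub_image_tsub (h.le_succ_of_mem hB)).trans
    (List.map_id π)

lemma map_maxB_rcomp {n : ℕ} {π : List (Finset ℕ)} (hπ : ∀ B ∈ π, B.Nonempty) :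
    (rcomp n π).map maxB = ((π.map minB).map (n + 1 - ·)).reverse := by
  simp only [rcomp, List.map_reverse, List.map_map]
  exact congrArg _ (List.map_congr_left fun B hB => maxB_image_tsub _ (hπ B hB))

lemma map_minB_rcomp {n : ℕ} {π : List (Finset ℕ)} (hπ : ∀ B ∈ π, B.Nonempty) :
    (rcomp n π).map minB = ((π.map maxB).map (n + 1 - ·)).reverse := by
  simp only [rcomp, List.map_reverse, List.map_map]
  exact congrArg _ (List.map_congr_left fun B hB => minB_image_tsub _ (hπ B hB))

lemma IsOSP.maxdes_rcomp {n : ℕ} {π : List (Finset ℕ)} (h : IsOSP n π) :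
    maxdes (rcomp n π) = mindes π := by
  rw [maxdes_eq_desCount, map_maxB_rcomp h.1,
    desCount_reverse_map (strictAntiOn_const_tsub (n + 1)), mindes_eq_desCount]
  simp only [List.mem_map, Set.mem_Iic]
  rintro _ ⟨B, hB, rfl⟩
  exact h.le_succ_of_mem hB _ (minB_mem (h.1 B hB))

lemma IsOSP.mindes_rcomp {n : ℕ} {π : List (Finset ℕ)} (h : IsOSP n π) :
    mindes (rcomp n π) = maxdes π := by
  rw [mindes_eq_desCount, map_minB_rcomp h.1,
    desCount_reverse_map (strictAntiOn_const_tsub (n + 1)), maxdes_eq_desCount]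
  simp only [List.mem_map, Set.mem_Iic]
  rintro _ ⟨B, hB, rfl⟩
  exact h.le_succ_of_mem hB _ (maxB_mem (h.1 B hB))

lemma bijOn_rcomp (n j : ℕ) :
    Set.BijOn (rcomp n) {π | IsOSP n π ∧ mindes π = j} {π | IsOSP n π ∧ maxdes π = j} := by
  refine ⟨?_, ?_, ?_⟩
  · rintro π ⟨h, rfl⟩
    exact ⟨isOSP_rcomp h, h.maxdes_rcomp⟩
  · rintro π ⟨h, -⟩ τ ⟨h', -⟩ heq
    rw [← h.rcomp_rcomp, ← h'.rcomp_rcomp, heq]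
  · rintro τ ⟨h, rfl⟩
    exact ⟨rcomp n τ, ⟨isOSP_rcomp h, h.mindes_rcomp⟩, h.rcomp_rcomp⟩

theorem stmt3 (n : ℕ) :
    (∀ j : ℕ, Nat.card {π : List (Finset ℕ) // IsOSP n π ∧ maxdes π = j} =
        Nat.card {π : List (Finset ℕ) // IsOSP n π ∧ mindes π = j}) ∧
    (∀ j : ℕ, Set.BijOn (rcomp n) {π | IsOSP n π ∧ mindes π = j}
        {π | IsOSP n π ∧ maxdes π = j}) ∧
    (∀ π : List (Finset ℕ), IsOSP n π → (rcomp n π).length = π.length) :=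
  ⟨fun j => Nat.card_congr ((bijOn_rcomp n j).equiv _).symm, bijOn_rcomp n,
    fun π _ => rcomp_length n π⟩
end

section
/- For any positive integers b_1,...,b_k and any index i, the number of ordered set partitions of [b_1+...+b_k] with block-size composition (b_1,...,b_i,b_{i+1},...,b_k) that word-avoid 123 equals the number with block-size composition (b_1,...,b_{i+1},b_i,...,b_k) that word-avoid 123; i.e., exchanging two adjacent block sizes does not change the count. -/
/-!
A block with three elements already contains an increasing triple, so all blocks of a
123-avoiding ordered set partition have size 1 or 2, and only the exchange of adjacent sizes
`2, 1` and `1, 2` needs an argument. The three letters `m < p < q` of those two blocks then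
read `132` or `231`, resp. `213` or `312`, in the word. Exchanging `m` and `q` pairs
`231 ↔ 213` and `132 ↔ 312`; this is an involution, and it preserves 123-avoidance because
paired patterns have the same tightest increasing pair (`(p, q)`, resp. `(m, p)`), through which
any increasing triple using two of the three letters can be rerouted.
-/

open List

def HasInc3 (w : List ℕ) : Prop := ∃ a b c : ℕ, a < b ∧ b < c ∧ [a, b, c] <+ w

lemma HasInc3.mono {v w : List ℕ} (h : v <+ w) : HasInc3 v → HasInc3 w
  | ⟨a, b, c, hab, hbc, hv⟩ => ⟨a, b, c, hab, hbc, hv.trans h⟩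

lemma avoids123_iff_not_hasInc3 {w : List ℕ} : Avoids123 w ↔ ¬ HasInc3 w := by
  refine not_congr ⟨fun ⟨i, j, k, hij, hjk, hk, hab, hbc⟩ => ?_,
    fun ⟨a, b, c, hab, hbc, h⟩ => ?_⟩
  · have hj := hjk.trans hk
    have hi := hij.trans hj
    refine ⟨w[i], w[j], w[k], by simpa [getD_eq_getElem, hi, hj] using hab,
      by simpa [getD_eq_getElem, hj, hk] using hbc, ?_⟩
    simpa using map_getElem_sublist (l := w) (is := [⟨i, hi⟩, ⟨j, hj⟩, ⟨k, hk⟩])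
      (by simp [← Fin.val_fin_lt]; omega)
  · obtain ⟨is, his, hpw⟩ := sublist_eq_map_getElem h
    rcases is with _ | ⟨i, _ | ⟨j, _ | ⟨k, _ | _⟩⟩⟩ <;> simp at his
    obtain ⟨rfl, rfl, rfl⟩ := his
    simp [← Fin.val_fin_lt] at hpw
    exact ⟨i, j, k, hpw.1.1, hpw.2, k.2, by simpa [getD_eq_getElem] using hab,
      by simpa [getD_eq_getElem] using hbc⟩

lemma not_hasInc3_triple {x y z : ℕ} (h : ¬ (x < y ∧ y < z)) : ¬ HasInc3 [x, y, z] := by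
  rintro ⟨a, b, c, hab, hbc, hs⟩
  obtain ⟨rfl, rfl, rfl⟩ : a = x ∧ b = y ∧ c = z := by simpa using hs.eq_of_length
  exact h ⟨hab, hbc⟩

/-- An increasing triple of `l ++ m ++ r` meets `m` in at most two consecutive letters, and an
increasing pair of `m` can be traded for the pair `[p, q]` of `m'`, which lies inside it. -/
lemma HasInc3.of_window {l m m' r : List ℕ} {p q : ℕ} (hmem : ∀ a ∈ m, a ∈ m')
    (hpq : p < q) (hpq' : [p, q] <+ m')
    (hdom : ∀ a b, a < b → [a, b] <+ m → a ≤ p ∧ q ≤ b)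
    (hm : ¬ HasInc3 m) (h : HasInc3 (l ++ m ++ r)) : HasInc3 (l ++ m' ++ r) := by
  obtain ⟨a, b, c, hab, hbc, h⟩ := h
  obtain ⟨s, t, hst, hs, ht⟩ := sublist_append_iff.mp h
  obtain ⟨u, v, rfl, hu, hv⟩ := sublist_append_iff.mp hs
  have replace : ∀ v', v' <+ m' → u ++ v' ++ t <+ l ++ m' ++ r :=
    fun v' hv' => (hu.append hv').append ht
  have hlen := congrArg length hst
  rcases v with _ | ⟨a₁, _ | ⟨a₂, _ | ⟨a₃, v⟩⟩⟩ <;>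
    simp only [length_cons, length_nil, length_append] at hlen
  · exact ⟨a, b, c, hab, hbc, hst ▸ replace [] (nil_sublist _)⟩
  · refine ⟨a, b, c, hab, hbc, hst ▸ replace [a₁] (singleton_sublist.mpr ?_)⟩
    exact hmem a₁ (by simpa using hv.subset)
  · rcases u with _ | ⟨a', _ | _⟩
    · obtain ⟨rfl, rfl, rfl⟩ : a₁ = a ∧ a₂ = b ∧ t = [c] := by simpa using hst.symm
      have := hdom a₁ a₂ hab hv
      exact ⟨p, q, c, hpq, by omega, by simpa using replace _ hpq'⟩
    · obtain ⟨rfl, rfl, rfl, rfl⟩ : a' = a ∧ a₁ = b ∧ a₂ = c ∧ t = [] := by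
        simpa using hst.symm
      have := hdom a₁ a₂ hbc hv
      exact ⟨a', p, q, by omega, hpq, by simpa using replace _ hpq'⟩
    · simp only [length_cons] at hlen
      omega
  · obtain ⟨rfl, rfl, rfl⟩ : u = [] ∧ v = [] ∧ t = [] := by
      refine ⟨?_, ?_, ?_⟩ <;> apply eq_nil_of_length_eq_zero <;> omega
    obtain ⟨rfl, rfl, rfl⟩ : a = a₁ ∧ b = a₂ ∧ c = a₃ := by simpa using hst
    exact absurd ⟨a, b, c, hab, hbc, hv⟩ hm

lemma hasInc3_window_congr {x y z x' y' z' p q : ℕ} (l r : List ℕ)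
    (hmem : ∀ a, a ∈ [x, y, z] ↔ a ∈ [x', y', z'])
    (havoid : ¬ (x < y ∧ y < z)) (havoid' : ¬ (x' < y' ∧ y' < z')) (hpq : p < q)
    (hsub : [p, q] <+ [x, y, z]) (hsub' : [p, q] <+ [x', y', z'])
    (hdom : ∀ a b, a < b → [a, b] <+ [x, y, z] ∨ [a, b] <+ [x', y', z'] →
      a ≤ p ∧ q ≤ b) :
    HasInc3 (l ++ [x, y, z] ++ r) ↔ HasInc3 (l ++ [x', y', z'] ++ r) :=
  ⟨HasInc3.of_window (fun a => (hmem a).1) hpq hsub' (fun a b hab h => hdom a b hab (.inl h))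
      (not_hasInc3_triple havoid),
    HasInc3.of_window (fun a => (hmem a).2) hpq hsub (fun a b hab h => hdom a b hab (.inr h))
      (not_hasInc3_triple havoid')⟩

lemma hasInc3_231_iff_213 {m p q : ℕ} (hmp : m < p) (hpq : p < q) (l r : List ℕ) :
    HasInc3 (l ++ [p, q, m] ++ r) ↔ HasInc3 (l ++ [p, m, q] ++ r) :=
  hasInc3_window_congr l r (by simp; tauto) (by omega) (by omega) hpq (by simp) (by simp)
    (by intro a b hab h; simp [sublist_cons_iff] at h; omega)

lemma hasInc3_132_iff_312 {m p q : ℕ} (hmp : m < p) (hpq : p < q) (l r : List ℕ) :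
    HasInc3 (l ++ [m, q, p] ++ r) ↔ HasInc3 (l ++ [q, m, p] ++ r) :=
  hasInc3_window_congr l r (by simp; tauto) (by omega) (by omega) hmp (by simp) (by simp)
    (by intro a b hab h; simp [sublist_cons_iff] at h; omega)

lemma card_le_two_of_avoids123 {π : List (Finset ℕ)} (hav : Avoids123 (word π))
    {B : Finset ℕ} (hB : B ∈ π) : B.card ≤ 2 := by
  have hsub : B.sort (· ≤ ·) <+ word π := sublist_flatten_of_mem (mem_map_of_mem hB)
  have hsorted : (B.sort (· ≤ ·)).Pairwise (· < ·) := (B.sortedLT_sort).pairwise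
  rw [← B.length_sort (· ≤ ·)]
  rcases hs : B.sort (· ≤ ·) with _ | ⟨a, _ | ⟨b, _ | ⟨c, rest⟩⟩⟩ <;>
    simp only [length_cons, length_nil] <;> try omega
  rw [hs] at hsub hsorted
  simp only [pairwise_cons, mem_cons, forall_eq_or_imp] at hsorted
  exact (avoids123_iff_not_hasInc3.mp hav
    ⟨a, b, c, hsorted.1.1, hsorted.2.1.1, (by simp : [a, b, c] <+ _).trans hsub⟩).elim

lemma minB_eq {B : Finset ℕ} {a : ℕ} (ha : a ∈ B) (h : ∀ c ∈ B, a ≤ c) : minB B = a :=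
  IsLeast.csInf_eq ⟨ha, h⟩

lemma maxB_eq {B : Finset ℕ} {a : ℕ} (ha : a ∈ B) (h : ∀ c ∈ B, c ≤ a) : maxB B = a :=
  le_antisymm (Finset.sup_le h) (Finset.le_sup (f := id) ha)

lemma sort_pair {a b : ℕ} (h : a < b) : ({a, b} : Finset ℕ).sort (· ≤ ·) = [a, b] := by
  rw [Finset.sort_insert _ (by simp; omega) (by simp; omega), Finset.sort_singleton]

noncomputable def swapBlocks (P S : Finset ℕ) : Finset ℕ × Finset ℕ :=
  let w := (P.sort (· ≤ ·) ++ S.sort (· ≤ ·)).map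
    (Equiv.swap (minB (P ∪ S)) (maxB (P ∪ S)))
  ((w.take S.card).toFinset, (w.drop S.card).toFinset)

lemma swapBlocks_231 {m p q : ℕ} (hmp : m < p) (hpq : p < q) :
    swapBlocks {p, q} {m} = ({p}, {m, q}) := by
  have hmin : minB ({p, q} ∪ {m}) = m := minB_eq (by simp) (by simp; omega)
  have hmax : maxB ({p, q} ∪ {m}) = q := maxB_eq (by simp) (by simp; omega)
  simp only [swapBlocks, hmin, hmax, sort_pair hpq, Finset.sort_singleton]
  simp [Equiv.swap_apply_of_ne_of_ne, hmp.ne', hpq.ne]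

lemma swapBlocks_213 {m p q : ℕ} (hmp : m < p) (hpq : p < q) :
    swapBlocks {p} {m, q} = ({p, q}, {m}) := by
  have hmin : minB ({p} ∪ {m, q}) = m := minB_eq (by simp) (by simp; omega)
  have hmax : maxB ({p} ∪ {m, q}) = q := maxB_eq (by simp) (by simp; omega)
  simp only [swapBlocks, hmin, hmax, sort_pair (hmp.trans hpq), Finset.sort_singleton]
  simp [Finset.card_pair (hmp.trans hpq).ne, Equiv.swap_apply_of_ne_of_ne, hmp.ne',
    hpq.ne]

lemma swapBlocks_132 {m p q : ℕ} (hmp : m < p) (hpq : p < q) :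
    swapBlocks {m, q} {p} = ({q}, {m, p}) := by
  have hmin : minB ({m, q} ∪ {p}) = m := minB_eq (by simp) (by simp; omega)
  have hmax : maxB ({m, q} ∪ {p}) = q := maxB_eq (by simp) (by simp; omega)
  simp only [swapBlocks, hmin, hmax, sort_pair (hmp.trans hpq), Finset.sort_singleton]
  simp [Equiv.swap_apply_of_ne_of_ne, hmp.ne', hpq.ne]

lemma swapBlocks_312 {m p q : ℕ} (hmp : m < p) (hpq : p < q) :
    swapBlocks {q} {m, p} = ({m, q}, {p}) := by
  have hmin : minB ({q} ∪ {m, p}) = m := minB_eq (by simp) (by simp; omega)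
  have hmax : maxB ({q} ∪ {m, p}) = q := maxB_eq (by simp) (by simp; omega)
  simp only [swapBlocks, hmin, hmax, sort_pair hmp, Finset.sort_singleton]
  simp [Finset.card_pair hmp.ne, Equiv.swap_apply_of_ne_of_ne, hmp.ne', hpq.ne]

structure IsSwapPair (P S P' S' : Finset ℕ) : Prop where
  swapBlocks_eq : swapBlocks P S = (P', S')
  swapBlocks_eq_symm : swapBlocks P' S' = (P, S)
  union_eq : P' ∪ S' = P ∪ S
  disjoint : Disjoint P' S'
  card_fst : P'.card = S.card
  card_snd : S'.card = P.card
  hasInc3_iff : ∀ l r : List ℕ,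
    HasInc3 (l ++ (P'.sort (· ≤ ·) ++ S'.sort (· ≤ ·)) ++ r) ↔
      HasInc3 (l ++ (P.sort (· ≤ ·) ++ S.sort (· ≤ ·)) ++ r)

lemma IsSwapPair.symm {P S P' S' : Finset ℕ} (h : IsSwapPair P S P' S') (hPS : Disjoint P S) :
    IsSwapPair P' S' P S :=
  ⟨h.2, h.1, h.3.symm, hPS, h.6.symm, h.5.symm, fun l r => (h.7 l r).symm⟩

lemma isSwapPair_231 {m p q : ℕ} (hmp : m < p) (hpq : p < q) :
    IsSwapPair {p, q} {m} {p} {m, q} where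
  swapBlocks_eq := swapBlocks_231 hmp hpq
  swapBlocks_eq_symm := swapBlocks_213 hmp hpq
  union_eq := by ext; simp; tauto
  disjoint := by simp; omega
  card_fst := by simp
  card_snd := by rw [Finset.card_pair (hmp.trans hpq).ne, Finset.card_pair hpq.ne]
  hasInc3_iff l r := by
    simpa [sort_pair hpq, sort_pair (hmp.trans hpq)] using
      (hasInc3_231_iff_213 hmp hpq l r).symm

lemma isSwapPair_132 {m p q : ℕ} (hmp : m < p) (hpq : p < q) :
    IsSwapPair {m, q} {p} {q} {m, p} where
  swapBlocks_eq := swapBlocks_132 hmp hpq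
  swapBlocks_eq_symm := swapBlocks_312 hmp hpq
  union_eq := by ext; simp
  disjoint := by simp; omega
  card_fst := by simp
  card_snd := by rw [Finset.card_pair hmp.ne, Finset.card_pair (hmp.trans hpq).ne]
  hasInc3_iff l r := by
    simpa [sort_pair hmp, sort_pair (hmp.trans hpq)] using
      (hasInc3_132_iff_312 hmp hpq l r).symm

lemma exists_lt_of_card_eq_two {P : Finset ℕ} (h : P.card = 2) :
    ∃ x y, x < y ∧ P = {x, y} := by
  obtain ⟨a, b, hne, rfl⟩ := Finset.card_eq_two.mp h
  rcases hne.lt_or_gt with hab | hba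
  · exact ⟨a, b, hab, rfl⟩
  · exact ⟨b, a, hba, Finset.pair_comm a b⟩

lemma exists_isSwapPair {P S : Finset ℕ} (hPS : Disjoint P S)
    (hcard : P.card = 2 ∧ S.card = 1 ∨ P.card = 1 ∧ S.card = 2)
    (hav : ¬ HasInc3 (P.sort (· ≤ ·) ++ S.sort (· ≤ ·))) :
    ∃ P' S', IsSwapPair P S P' S' := by
  rcases hcard with ⟨hP, hS⟩ | ⟨hP, hS⟩
  · obtain ⟨x, y, hxy, rfl⟩ := exists_lt_of_card_eq_two hP
    obtain ⟨z, rfl⟩ := Finset.card_eq_one.mp hS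
    simp [sort_pair hxy] at hPS hav
    rcases Ne.lt_or_gt hPS.1 with hzx | hxz
    · exact ⟨_, _, isSwapPair_231 hzx hxy⟩
    · have hzy : z < y := by
        by_contra hyz
        exact hav ⟨x, y, z, hxy, by omega, by simp⟩
      exact ⟨_, _, isSwapPair_132 hxz hzy⟩
  · obtain ⟨s, rfl⟩ := Finset.card_eq_one.mp hP
    obtain ⟨u, v, huv, rfl⟩ := exists_lt_of_card_eq_two hS
    simp [sort_pair huv] at hPS hav
    have hus : u < s := by
      by_contra hsu
      exact hav ⟨s, u, v, by omega, huv, by simp⟩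
    rcases Ne.lt_or_gt hPS.2 with hsv | hvs
    · exact ⟨_, _, (isSwapPair_231 hus hsv).symm (by simp; omega)⟩
    · exact ⟨_, _, (isSwapPair_132 huv hvs).symm (by simp; omega)⟩

lemma IsOSP.replace {n : ℕ} {T D : List (Finset ℕ)} {P S P' S' : Finset ℕ}
    (h : IsOSP n (T ++ P :: S :: D)) (hU : P' ∪ S' = P ∪ S) (hdisj : Disjoint P' S')
    (hP' : P'.Nonempty) (hS' : S'.Nonempty) : IsOSP n (T ++ P' :: S' :: D) := by
  obtain ⟨hne, hpw, hU'⟩ := h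
  have hleft X : Disjoint X P' ∧ Disjoint X S' ↔ Disjoint X P ∧ Disjoint X S := by
    rw [← Finset.disjoint_union_right, hU, Finset.disjoint_union_right]
  have hright X : Disjoint P' X ∧ Disjoint S' X ↔ Disjoint P X ∧ Disjoint S X := by
    rw [← Finset.disjoint_union_left, hU, Finset.disjoint_union_left]
  refine ⟨?_, ?_, ?_⟩
  · simp only [mem_append, mem_cons] at hne ⊢
    rintro B (hB | rfl | rfl | hB)
    exacts [hne B (.inl hB), hP', hS', hne B (.inr (.inr (.inr hB)))]
  · simp only [pairwise_append, pairwise_cons, mem_cons, forall_eq_or_imp] at hpw ⊢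
    obtain ⟨hT, ⟨⟨-, hPD⟩, hSD, hD⟩, hTPS⟩ := hpw
    have hD' a (ha : a ∈ D) := (hright a).2 ⟨hPD a ha, hSD a ha⟩
    have hT' a (ha : a ∈ T) := (hleft a).2 ⟨(hTPS a ha).1, (hTPS a ha).2.1⟩
    exact ⟨hT, ⟨⟨hdisj, fun a ha => (hD' a ha).1⟩, fun a ha => (hD' a ha).2, hD⟩,
      fun a ha => ⟨(hT' a ha).1, (hT' a ha).2, (hTPS a ha).2.2⟩⟩
  · simpa [foldr_append, ← Finset.union_assoc, hU] using hU'

lemma word_append_cons_cons (T D : List (Finset ℕ)) (P S : Finset ℕ) :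
    word (T ++ P :: S :: D) = word T ++ (P.sort (· ≤ ·) ++ S.sort (· ≤ ·)) ++ word D := by
  simp [word]

noncomputable def swapBlocksAt (i : ℕ) (π : List (Finset ℕ)) : List (Finset ℕ) :=
  let B := swapBlocks (π.getD i ∅) (π.getD (i + 1) ∅)
  (π.set i B.1).set (i + 1) B.2

lemma swapBlocksAt_append_cons_cons (T D : List (Finset ℕ)) (P S : Finset ℕ) :
    swapBlocksAt T.length (T ++ P :: S :: D) =
      T ++ (swapBlocks P S).1 :: (swapBlocks P S).2 :: D := by
  simp [swapBlocksAt]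

lemma exists_eq_append_cons_cons {α : Type*} {l : List α} {i : ℕ} (hi : i + 1 < l.length) :
    ∃ T x y D, l = T ++ x :: y :: D ∧ T.length = i :=
  ⟨l.take i, l[i], l[i + 1], l.drop (i + 2), by
    rw [getElem_cons_drop, getElem_cons_drop, take_append_drop], by simp; omega⟩

lemma set_set_getD_append_cons_cons {α : Type*} (T D : List α) (x y d : α) :
    ((T ++ x :: y :: D).set T.length ((T ++ x :: y :: D).getD (T.length + 1) d)).set
      (T.length + 1) ((T ++ x :: y :: D).getD T.length d) = T ++ y :: x :: D := by
  simp

lemma swapBlocksAt_spec {n : ℕ} {T D : List ℕ} {x y : ℕ} (hxy : x ≠ y)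
    {π : List (Finset ℕ)}
    (h : IsOSP n π ∧ π.map Finset.card = T ++ x :: y :: D ∧ Avoids123 (word π)) :
    (IsOSP n (swapBlocksAt T.length π) ∧
      (swapBlocksAt T.length π).map Finset.card = T ++ y :: x :: D ∧
      Avoids123 (word (swapBlocksAt T.length π))) ∧
    swapBlocksAt T.length (swapBlocksAt T.length π) = π := by
  obtain ⟨hosp, hcard, hav⟩ := h
  obtain ⟨T', P, S, D', rfl, rfl, rfl, rfl, rfl⟩ : ∃ T' P S D', π = T' ++ P :: S :: D' ∧
      T'.map Finset.card = T ∧ P.card = x ∧ S.card = y ∧ D'.map Finset.card = D := by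
    simpa [map_eq_append_iff, map_eq_cons_iff] using hcard
  rw [length_map, swapBlocksAt_append_cons_cons]
  have hPS : Disjoint P S := pairwise_pair.mp (hosp.2.1.sublist (by simp))
  have hwindow : ¬ HasInc3 (P.sort (· ≤ ·) ++ S.sort (· ≤ ·)) := fun h =>
    avoids123_iff_not_hasInc3.mp hav
      (h.mono (word_append_cons_cons T' D' P S ▸ infix_append _ _ _ |>.sublist))
  have hP := (hosp.1 P (by simp)).card_pos
  have hS := (hosp.1 S (by simp)).card_pos
  have hP2 := card_le_two_of_avoids123 hav (B := P) (by simp)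
  have hS2 := card_le_two_of_avoids123 hav (B := S) (by simp)
  obtain ⟨P', S', hswap⟩ := exists_isSwapPair hPS (by omega) hwindow
  rw [hswap.swapBlocks_eq]
  refine ⟨⟨hosp.replace hswap.union_eq hswap.disjoint ?_ ?_, ?_, ?_⟩, ?_⟩
  · exact Finset.card_pos.mp (hswap.card_fst ▸ hS)
  · exact Finset.card_pos.mp (hswap.card_snd ▸ hP)
  · simp [hswap.card_fst, hswap.card_snd]
  · rw [avoids123_iff_not_hasInc3, word_append_cons_cons, hswap.hasInc3_iff,
      ← word_append_cons_cons, ← avoids123_iff_not_hasInc3]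
    exact hav
  · rw [swapBlocksAt_append_cons_cons, hswap.swapBlocks_eq_symm]

theorem stmt14_general (b : List ℕ) (i : ℕ)
    (hi : i + 1 < b.length) :
    Nat.card {π : List (Finset ℕ) // IsOSP b.sum π ∧
        π.map Finset.card = b ∧ Avoids123 (word π)} =
    Nat.card {π : List (Finset ℕ) // IsOSP b.sum π ∧
        π.map Finset.card = (b.set i (b.getD (i + 1) 0)).set (i + 1) (b.getD i 0) ∧
        Avoids123 (word π)} := by
  obtain ⟨T, x, y, D, rfl, rfl⟩ := exists_eq_append_cons_cons hi
  rw [set_set_getD_append_cons_cons]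
  rcases eq_or_ne x y with rfl | hxy
  · rfl
  exact Nat.card_congr
    { toFun π := ⟨swapBlocksAt T.length π, (swapBlocksAt_spec hxy π.2).1⟩
      invFun π := ⟨swapBlocksAt T.length π, (swapBlocksAt_spec hxy.symm π.2).1⟩
      left_inv π := Subtype.ext (swapBlocksAt_spec hxy π.2).2
      right_inv π := Subtype.ext (swapBlocksAt_spec hxy.symm π.2).2 }

theorem stmt14 (b : List ℕ) (hb : ∀ x ∈ b, 1 ≤ x) (i : ℕ)
    (hi : i + 1 < b.length) :
    Nat.card {π : List (Finset ℕ) // IsOSP b.sum π ∧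
        π.map Finset.card = b ∧ Avoids123 (word π)} =
    Nat.card {π : List (Finset ℕ) // IsOSP b.sum π ∧
        π.map Finset.card = (b.set i (b.getD (i + 1) 0)).set (i + 1) (b.getD i 0) ∧
        Avoids123 (word π)} :=
  stmt14_general b i hi
end
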